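/- arXiv:1607.05144 — 2 statements merged into one kernel-verified Lean document; each statement's English description precedes it below -/
import Mathlib

section
/- Let L = (l₁, …, lₙ) be a nonempty finite list of positive integers with total N = l₁ + ⋯ + lₙ, and let f : ℕ → ℝ satisfy 0 ≤ f(l) ≤ 1 for every l ≥ 1. Then the SALZA conditional complexity estimate is normalized: 0 ≤ S_f(L) < 1, where S_f(L) = (1 − (∑ᵢ lᵢ·f(lᵢ) − (∑ᵢ f(lᵢ) − 1))/N) · ((n − 1)/N). -/
lemma sum_map_sub' (L : List ℕ) (g h : ℕ → ℝ) :
    (L.map (fun l => g l - h l)).sum = (L.map g).sum - (L.map h).sum := by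
  induction L with
  | nil => simp
  | cons a t ih => simp [ih]; ring

/-- The SALZA conditional complexity estimate `S_f(L) = 𝒮 · 𝒵` associated with
the list `L` of symbol lengths and the admissible function `f`. -/
noncomputable def salza (f : ℕ → ℝ) (L : List ℕ) : ℝ :=
  (1 - ((L.map (fun l : ℕ => (l : ℝ) * f l)).sum - ((L.map (fun l => f l)).sum - 1)) /
      (L.sum : ℝ)) *
    (((L.length : ℝ) - 1) / (L.sum : ℝ))

/-- The SALZA conditional complexity estimate is normalized: `0 ≤ S_f(L) < 1`. -/
theorem salza_nonneg_lt_one (L : List ℕ) (hL : L ≠ []) (hpos : ∀ l ∈ L, 1 ≤ l)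
    (f : ℕ → ℝ) (hf : ∀ l : ℕ, 1 ≤ l → 0 ≤ f l ∧ f l ≤ 1) :
    0 ≤ salza f L ∧ salza f L < 1 := by
  set A := (L.map (fun l : ℕ => (l : ℝ) * f l)).sum with hA
  set B := (L.map (fun l => f l)).sum with hB
  have hn : 1 ≤ L.length := List.length_pos_iff.mpr hL
  have hnN : L.length ≤ L.sum := by
    have : (L.map (fun _ => 1)).sum ≤ (L.map id).sum :=
      List.sum_le_sum (fun l hl => by simpa using hpos l hl)
    simpa using this
  have hNpos : 0 < L.sum := lt_of_lt_of_le hn hnN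
  have hN : (0:ℝ) < (L.sum : ℝ) := by exact_mod_cast hNpos
  have hnR : (1:ℝ) ≤ (L.length : ℝ) := by exact_mod_cast hn
  have hnNR : (L.length : ℝ) ≤ (L.sum : ℝ) := by exact_mod_cast hnN
  have hBA : B ≤ A := by
    apply List.sum_le_sum
    intro l hl
    have h1 := hpos l hl
    obtain ⟨h0, _⟩ := hf l h1
    have : (1:ℝ) ≤ (l:ℝ) := by exact_mod_cast h1
    nlinarith
  have hABn : A - B ≤ (L.sum : ℝ) - (L.length : ℝ) := by
    have key : (L.map (fun l : ℕ => (l:ℝ) * f l - f l)).sum ≤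
        (L.map (fun l : ℕ => (l:ℝ) - 1)).sum := by
      apply List.sum_le_sum
      intro l hl
      have h1 := hpos l hl
      obtain ⟨h0, h2⟩ := hf l h1
      have : (1:ℝ) ≤ (l:ℝ) := by exact_mod_cast h1
      nlinarith
    rw [sum_map_sub' L (fun l => (l:ℝ) * f l) (fun l => f l)] at key
    rw [sum_map_sub' L (fun l => (l:ℝ)) (fun _ => 1)] at key
    have hc : (L.map (fun l : ℕ => (l:ℝ))).sum = (L.sum : ℝ) := by
      simp [Nat.cast_list_sum]
    have hc2 : (L.map (fun _ : ℕ => (1:ℝ))).sum = (L.length : ℝ) := by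
      induction L with
      | nil => simp
      | cons a t ih => simp at ih ⊢; linarith
    rw [hc, hc2] at key
    linarith
  have hS0 : 0 ≤ 1 - (A - (B - 1)) / (L.sum : ℝ) := by
    rw [sub_nonneg]
    rw [div_le_one hN]
    linarith
  have hS1 : 1 - (A - (B - 1)) / (L.sum : ℝ) < 1 := by
    have hpos' : (0:ℝ) < A - (B - 1) := by linarith
    have : 0 < (A - (B - 1)) / (L.sum : ℝ) := div_pos hpos' hN
    linarith
  have hZ0 : 0 ≤ ((L.length : ℝ) - 1) / (L.sum : ℝ) := by
    apply div_nonneg _ (le_of_lt hN); linarith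
  have hZ1 : ((L.length : ℝ) - 1) / (L.sum : ℝ) ≤ 1 := by
    rw [div_le_one hN]; linarith
  unfold salza
  rw [← hA, ← hB]
  constructor
  · exact mul_nonneg hS0 hZ0
  · calc (1 - (A - (B - 1)) / (L.sum : ℝ)) * (((L.length : ℝ) - 1) / (L.sum : ℝ))
        ≤ (1 - (A - (B - 1)) / (L.sum : ℝ)) * 1 := by
          exact mul_le_mul_of_nonneg_left hZ1 hS0
      _ = 1 - (A - (B - 1)) / (L.sum : ℝ) := mul_one _
      _ < 1 := hS1
end

section
/- Let L = (l₁, …, lₙ) be a nonempty finite list of positive integers with total N = l₁ + ⋯ + lₙ, and let f : ℕ → ℝ satisfy 0 ≤ f(l) ≤ 1 for every l ≥ 1. Then the spreading factor 𝒮 = 1 − (∑ᵢ lᵢ·f(lᵢ) − (∑ᵢ f(lᵢ) − 1))/N satisfies (n − 1)/N ≤ 𝒮 ≤ 1 − 1/N; in particular 0 ≤ 𝒮 < 1. -/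
/-- The spreading factor `𝒮` of the SALZA conditional complexity estimate
associated with the list `L` of symbol lengths and the function `f`. -/
noncomputable def salzaSpread (f : ℕ → ℝ) (L : List ℕ) : ℝ :=
  1 - ((L.map (fun l : ℕ => (l : ℝ) * f l)).sum - ((L.map (fun l : ℕ => f l)).sum - 1)) /
    (L.sum : ℝ)

lemma salza_diff_bounds (f : ℕ → ℝ) (hf : ∀ l : ℕ, 1 ≤ l → 0 ≤ f l ∧ f l ≤ 1) :
    ∀ L : List ℕ, (∀ l ∈ L, 1 ≤ l) →
      0 ≤ (L.map (fun l : ℕ => (l : ℝ) * f l)).sum - (L.map (fun l : ℕ => f l)).sum ∧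
      (L.map (fun l : ℕ => (l : ℝ) * f l)).sum - (L.map (fun l : ℕ => f l)).sum ≤
        (L.sum : ℝ) - L.length := by
  intro L
  induction L with
  | nil => simp
  | cons a t ih =>
    intro h
    have ha : 1 ≤ a := h a (by simp)
    have hfa := hf a ha
    have iht := ih (fun l hl => h l (by simp [hl]))
    have h1 : (1 : ℝ) ≤ (a : ℝ) := by exact_mod_cast ha
    have key1 : 0 ≤ ((a : ℝ) - 1) * f a := mul_nonneg (by linarith) hfa.1
    have key2 : ((a : ℝ) - 1) * f a ≤ (a : ℝ) - 1 := by
      nlinarith [hfa.1, hfa.2]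
    have es : ((a :: t).sum : ℝ) = (a : ℝ) + (t.sum : ℝ) := by
      rw [List.sum_cons]; push_cast; ring
    have el : ((a :: t).length : ℝ) = (t.length : ℝ) + 1 := by
      rw [List.length_cons]; push_cast; ring
    simp only [List.map_cons, List.sum_cons, List.length_cons]
    push_cast at iht ⊢
    constructor <;> nlinarith [iht.1, iht.2]

lemma salza_length_le_sum (L : List ℕ) (hpos : ∀ l ∈ L, 1 ≤ l) : L.length ≤ L.sum := by
  induction L with
  | nil => simp
  | cons a t ih =>
    simp only [List.length_cons, List.sum_cons]
    have := ih (fun l hl => hpos l (by simp [hl]))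
    have := hpos a (by simp)
    omega

/-- For a nonempty list `L` of positive integers with total `N` and an admissible `f`,
the spreading factor satisfies `(n − 1)/N ≤ 𝒮 ≤ 1 − 1/N`; in particular `0 ≤ 𝒮 < 1`. -/
theorem salzaSpread_bounds (L : List ℕ) (hL : L ≠ []) (hpos : ∀ l ∈ L, 1 ≤ l)
    (f : ℕ → ℝ) (hf : ∀ l : ℕ, 1 ≤ l → 0 ≤ f l ∧ f l ≤ 1) :
    (((L.length : ℝ) - 1) / (L.sum : ℝ) ≤ salzaSpread f L ∧
        salzaSpread f L ≤ 1 - 1 / (L.sum : ℝ)) ∧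
      (0 ≤ salzaSpread f L ∧ salzaSpread f L < 1) := by
  obtain ⟨hD0, hD1⟩ := salza_diff_bounds f hf L hpos
  have hn : 1 ≤ L.length := List.length_pos_iff.mpr hL
  have hnN : L.length ≤ L.sum := salza_length_le_sum L hpos
  have hN : 0 < (L.sum : ℝ) := by
    have : 0 < L.sum := lt_of_lt_of_le hn hnN
    exact_mod_cast this
  have hnR : (1 : ℝ) ≤ (L.length : ℝ) := by exact_mod_cast hn
  have hnNR : (L.length : ℝ) ≤ (L.sum : ℝ) := by exact_mod_cast hnN
  unfold salzaSpread
  set A := (L.map (fun l : ℕ => (l : ℝ) * f l)).sum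
  set B := (L.map (fun l : ℕ => f l)).sum
  set N := (L.sum : ℝ)
  have key : 1 - (A - (B - 1)) / N = (N - (A - (B - 1))) / N := by
    field_simp
  have key2 : (1 : ℝ) - 1 / N = (N - 1) / N := by field_simp
  rw [key, key2]
  have e1 : ((L.length : ℝ) - 1) / N ≤ (N - (A - (B - 1))) / N := by
    rw [div_le_div_iff₀ hN hN]
    nlinarith
  have e2 : (N - (A - (B - 1))) / N ≤ (N - 1) / N := by
    rw [div_le_div_iff₀ hN hN]
    nlinarith
  refine ⟨⟨e1, e2⟩, le_trans (div_nonneg (by linarith) hN.le) e1, lt_of_le_of_lt e2 ?_⟩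
  rw [div_lt_one hN]
  linarith
end
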